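/- Let ℓ be a prime, m ∈ ℕ ∪ {∞} and M ≥ M_1(m). Let K be a field with μ_{2ℓ^M} ⊂ K, and let σ, τ ∈ 𝔤^m(K) be two valuative elements. Then the following are equivalent: (1) the valuations v_σ and v_τ are comparable; (2) there exist M-lifts σ', τ' ∈ 𝔤^M(K) of σ, τ such that (σ',τ') is a C-pair. -/

import Mathlib

open Polynomial

noncomputable section

/-- The coefficient ring `Λ_m`: `ℤ/ℓ^m` for finite `m`, and `ℤ_ℓ` for `m = ∞`. -/
def Lam (ℓ : ℕ) [Fact ℓ.Prime] : ℕ∞ → Type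
  | ⊤ => PadicInt ℓ
  | (m : ℕ) => ZMod (ℓ ^ m)

instance (ℓ : ℕ) [Fact ℓ.Prime] : (m : ℕ∞) → CommRing (Lam ℓ m)
  | ⊤ => inferInstanceAs (CommRing (PadicInt ℓ))
  | (m : ℕ) => inferInstanceAs (CommRing (ZMod (ℓ ^ m)))

/-- The canonical projection `Λ_m → Λ_n` (for `n ≤ m`; junk value `0` otherwise). -/
def LamProj (ℓ : ℕ) [Fact ℓ.Prime] : (m n : ℕ∞) → Lam ℓ m →+ Lam ℓ n
  | ⊤, ⊤ => AddMonoidHom.id _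
  | ⊤, (n : ℕ) => (PadicInt.toZModPow n).toAddMonoidHom
  | (m : ℕ), (n : ℕ) =>
      if h : ℓ ^ n ∣ ℓ ^ m then (ZMod.castHom h (ZMod (ℓ ^ n))).toAddMonoidHom else 0
  | (_ : ℕ), ⊤ => 0

/-- The `ℓ^m`-minimized Galois group `𝔤^m(K) = Hom(Kˣ, Λ_m)`. -/
abbrev gal (ℓ : ℕ) [Fact ℓ.Prime] (m : ℕ∞) (K : Type*) [Field K] : Type _ :=
  Additive Kˣ →+ Lam ℓ m

variable {ℓ : ℕ} [Fact ℓ.Prime] {K : Type*} [Field K]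

open scoped Classical

/-- Evaluation of `σ ∈ 𝔤^m(K)` at a unit of `K`. -/
def galu {m : ℕ∞} (σ : gal ℓ m K) (x : Kˣ) : Lam ℓ m :=
  σ (Additive.ofMul x)

/-- Evaluation of `σ ∈ 𝔤^m(K)` at an arbitrary element of `K` (junk value `0` at `0`). -/
def galApp {m : ℕ∞} (σ : gal ℓ m K) (x : K) : Lam ℓ m :=
  if hx : x ≠ 0 then galu σ (Units.mk0 x hx) else 0

/-- Scalar multiplication of `𝔤^m(K)` by `Λ_m`. -/
def galSmul {m : ℕ∞} (a : Lam ℓ m) (σ : gal ℓ m K) : gal ℓ m K :=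
  AddMonoidHom.mk' (fun x => a * σ x) (by intro x y; simp only [map_add, mul_add])

/-- The canonical map `𝔤^m(K) → 𝔤^n(K)`, `σ ↦ σ_n`. -/
def galProj (m n : ℕ∞) (σ : gal ℓ m K) : gal ℓ n K :=
  (LamProj ℓ m n).comp σ

/-- `(σ,τ)` is a C-pair: `σ(x)·τ(1−x) = σ(1−x)·τ(x)` for all `x ∈ K ∖ {0,1}`. -/
def IsCPair {m : ℕ∞} (σ τ : gal ℓ m K) : Prop :=
  ∀ x : K, x ≠ 0 → x ≠ 1 →
    galApp σ x * galApp τ (1 - x) = galApp σ (1 - x) * galApp τ x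

/-- A subset of `𝔤^m(K)` is a C-set if all pairs of its elements are C-pairs. -/
def IsCSet {m : ℕ∞} (S : Set (gal ℓ m K)) : Prop :=
  ∀ σ ∈ S, ∀ τ ∈ S, IsCPair σ τ

/-- `μ_{c·ℓ^m} ⊂ K`: the polynomial `X^{c·ℓ^m} − 1` splits completely in `K`
(for all finite exponents when `m = ∞`). -/
def MuIn (K : Type*) [Field K] (c ℓ : ℕ) : ℕ∞ → Prop
  | ⊤ => ∀ k : ℕ, Polynomial.Splits (Polynomial.X ^ (c * ℓ ^ k) - 1 : Polynomial K)
  | (N : ℕ) => Polynomial.Splits (Polynomial.X ^ (c * ℓ ^ N) - 1 : Polynomial K)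

/-- `M_r(n) = (r+1)·n − r`. -/
def Mfun (r : ℕ) : ℕ∞ → ℕ∞
  | ⊤ => ⊤
  | (n : ℕ) => (((r + 1) * n - r : ℕ) : ℕ∞)

/-- `N(n) = M_1((6·ℓ^{3n−2} − 7)·(n−1) + 3n − 2)`. -/
def Nfun (ℓ : ℕ) : ℕ∞ → ℕ∞
  | ⊤ => ⊤
  | (n : ℕ) => Mfun 1 (((6 * ℓ ^ (3 * n - 2) - 7) * (n - 1) + 3 * n - 2 : ℕ) : ℕ∞)

/-- `R(n) = N(M_2(M_1(n)))`. -/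
def Rfun (ℓ : ℕ) (n : ℕ∞) : ℕ∞ :=
  Nfun ℓ (Mfun 2 (Mfun 1 n))

/-- The minimized inertia group `I_v^m` of a valuation (valuation subring) of `K`:
homomorphisms vanishing on the `v`-units. -/
def inertia (ℓ : ℕ) [Fact ℓ.Prime] (m : ℕ∞) (A : ValuationSubring K) : Set (gal ℓ m K) :=
  {σ | ∀ x : Kˣ, A.valuation (x : K) = 1 → galu σ x = 0}

/-- The minimized decomposition group `D_v^m` of a valuation (valuation subring) of `K`:
homomorphisms vanishing on the principal `v`-units `1 + 𝔪_v`. -/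
def decomp (ℓ : ℕ) [Fact ℓ.Prime] (m : ℕ∞) (A : ValuationSubring K) : Set (gal ℓ m K) :=
  {σ | ∀ x : Kˣ, A.valuation ((x : K) - 1) < 1 → galu σ x = 0}

/-- A subgroup of (the units of) a linearly ordered group-with-zero is convex. -/
def IsConvexSub {Γ : Type*} [LinearOrderedCommGroupWithZero Γ] (C : Subgroup Γˣ) : Prop :=
  ∀ γ c : Γˣ, (1 : Γ) ≤ (γ : Γ) → (γ : Γ) ≤ (c : Γ) → c ∈ C → γ ∈ C

/-- A subgroup is `ℓ`-divisible. -/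
def IsLDivisible {Γ : Type*} [LinearOrderedCommGroupWithZero Γ] (ℓ : ℕ) (C : Subgroup Γˣ) :
    Prop :=
  ∀ c ∈ C, ∃ d ∈ C, d ^ ℓ = c

/-- Condition (V1): the value group `vK` contains no nontrivial `ℓ`-divisible convex
subgroups. -/
def NoLDivConvex (ℓ : ℕ) (A : ValuationSubring K) : Prop :=
  ∀ C : Subgroup (A.ValueGroup)ˣ, IsConvexSub C → IsLDivisible ℓ C → C = ⊥

/-- The residue field `Kv` of a valuation. -/
abbrev resField (A : ValuationSubring K) : Type _ := IsLocalRing.ResidueField A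

/-- `τ ∈ 𝔤^m(Kv)` is the element induced by `σ ∈ D_v^m` (i.e. `τ = σ_v`): for every
`v`-unit `x` one has `τ(x̄) = σ(x)`. -/
def Induces {m : ℕ∞} (A : ValuationSubring K) (σ : gal ℓ m K)
    (τ : gal ℓ m (resField A)) : Prop :=
  ∀ (x : Kˣ) (h : A.valuation (x : K) = 1),
    galApp τ (IsLocalRing.residue A ⟨(x : K), (A.valuation_le_one_iff (x : K)).mp h.le⟩) =
      galu σ x

/-- An `m`-visible valuation. -/
def IsVisibleVal (ℓ : ℕ) [Fact ℓ.Prime] (m : ℕ∞) (A : ValuationSubring K) : Prop :=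
  NoLDivConvex ℓ A ∧
  ¬ IsCSet (Set.univ : Set (gal ℓ m (resField A))) ∧
  ∀ B : ValuationSubring (resField A),
    decomp ℓ m B = Set.univ → inertia ℓ m B = {0}

/-- `Σ^⊥ = ∩_{σ ∈ Σ} ker σ ⊆ Kˣ`. -/
def orth {m : ℕ∞} (S : Set (gal ℓ m K)) : Set Kˣ :=
  {x | ∀ σ ∈ S, galu σ x = 0}

/-- `σ` is valuative: `σ ∈ I_v^m` for some valuation `v` of `K`. -/
def IsValuative {m : ℕ∞} (σ : gal ℓ m K) : Prop :=
  ∃ A : ValuationSubring K, σ ∈ inertia ℓ m A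

/-- `V = v_σ` is the coarsest valuation with `σ ∈ I_V^m`. -/
def IsVsigma {m : ℕ∞} (σ : gal ℓ m K) (V : ValuationSubring K) : Prop :=
  σ ∈ inertia ℓ m V ∧ ∀ W : ValuationSubring K, σ ∈ inertia ℓ m W → W ≤ V

/-- `V = v_Σ` is the coarsest valuation with `Σ ⊆ I_V^m`. -/
def IsVSet {m : ℕ∞} (S : Set (gal ℓ m K)) (V : ValuationSubring K) : Prop :=
  S ⊆ inertia ℓ m V ∧ ∀ W : ValuationSubring K, S ⊆ inertia ℓ m W → W ≤ V

/-- The set `D^m_n(Σ)`. -/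
def Dmn (n m : ℕ∞) (S : Set (gal ℓ n K)) : Set (gal ℓ n K) :=
  {τ | ∀ σ ∈ S, ∃ τ₁ τ₂ : gal ℓ n K, ∃ σ' τ' τ₁' τ₂' : gal ℓ m K,
    galProj m n σ' = σ ∧ galProj m n τ' = τ ∧ galProj m n τ₁' = τ₁ ∧ galProj m n τ₂' = τ₂ ∧
    ¬ IsCPair τ₁ τ₂ ∧ IsCPair σ' τ' ∧ IsCPair σ' τ₁' ∧ IsCPair σ' τ₂'}

/-- The set `I^m_n(Σ)`. -/
def Imn (n m : ℕ∞) (S : Set (gal ℓ n K)) : Set (gal ℓ n K) :=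
  {σ | σ ∈ S ∧ ∃ σ' : gal ℓ m K, galProj m n σ' = σ ∧
    ∀ τ ∈ S, ∃ τ' : gal ℓ m K, galProj m n τ' = τ ∧ IsCPair σ' τ'}

/-- `K` is a function field over `k`, i.e. a finitely generated field extension. -/
def IsFunctionField (k K : Type*) [Field k] [Field K] [Algebra k K] : Prop :=
  ∃ s : Finset K, IntermediateField.adjoin k (s : Set K) = ⊤

/-- `trdeg(K|k) = d`. -/
def HasTrdeg (k K : Type*) [Field k] [Field K] [Algebra k K] (d : ℕ) : Prop :=
  ∃ b : Fin d → K, IsTranscendenceBasis k b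

/-- The set `ℓ^n·𝔤^m(K)` (interpreted as the trivial subgroup when `n = ∞`). -/
def lPowSet (ℓ : ℕ) [Fact ℓ.Prime] (m : ℕ∞) (K : Type*) [Field K] : ℕ∞ → Set (gal ℓ m K)
  | ⊤ => {0}
  | (k : ℕ) => {x | ∃ σ : gal ℓ m K, x = galSmul ((ℓ : Lam ℓ m) ^ k) σ}

end

/-!
If `v_σ` and `v_τ` are comparable, then `σ` and `τ` both lie in the inertia group of the finer
one. Inertia elements factor through the value group, which is torsion-free, so they lift from
`Λ_m` to `Λ_M` inside the inertia group (extend into the divisible group `ℝ/ℤ`, and pass to the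
limit for `ℤ_ℓ`); and any two elements of one inertia group `I_v` form a C-pair, because for
`x ∉ {0, 1}` one of `x`, `1 - x` is a `v`-unit, or else `ρ(1 - x) = ρ(x)` for all `ρ ∈ I_v`.

Conversely, `v_σ` exists: a Zorn-maximal `V` with `σ ∈ I_V` dominates every `W` with `σ ∈ I_W`.
Otherwise maximality provides `c` with `v(c) < 1 < w(c)` and `σ(c) ≠ 0`, whereas `σ(1 - c)` is
`0` through `V` and `σ(c)` through `W`. If `v_σ` and `v_τ` are incomparable, the same maximality
yields such a `c` with `σ(c) ≠ 0 ≠ τ(c)` in `Λ_m`; at `x = c / (c - 1)` one has `σ(x) = σ(c)`,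
`τ(1 - x) = -τ(c)` and `σ(1 - x) = τ(x) = 0`. For `M`-lifts forming a C-pair, the identity
`σ'(x) τ'(1 - x) = σ'(1 - x) τ'(x)` then has a left side not divisible by `ℓ^(2m-1)` and a right
side divisible by `ℓ^(2m)`, which is impossible in `Λ_M` as `M ≥ 2m - 1`.
-/

theorem ZMod.toAddCircle_castHom {b a : ℕ} [NeZero b] [NeZero (b * a)] (y : ZMod (b * a)) :
    toAddCircle (castHom (dvd_mul_right b a) (ZMod b) y) = a • toAddCircle y := by
  obtain ⟨j, rfl⟩ := ZMod.intCast_surjective y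
  have ha : (a : ℝ) ≠ 0 := by exact_mod_cast right_ne_zero_of_mul (NeZero.ne (b * a))
  rw [map_intCast, toAddCircle_intCast, toAddCircle_intCast, ← AddCircle.coe_nsmul, nsmul_eq_mul]
  congr 1
  push_cast
  field_simp

theorem AddMonoidHom.exists_zmod_lift {H : Type*} [AddCommGroup H] [IsAddTorsionFree H]
    {b N : ℕ} [NeZero N] (hbN : b ∣ N) (f : H →+ ZMod b) :
    ∃ F : H →+ ZMod N, (ZMod.castHom hbN (ZMod b)).toAddMonoidHom.comp F = f := by
  obtain ⟨a, rfl⟩ := hbN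
  have : NeZero b := ⟨left_ne_zero_of_mul (NeZero.ne (b * a))⟩
  have ha : a ≠ 0 := right_ne_zero_of_mul (NeZero.ne (b * a))
  -- Extend `f` along `h ↦ a • h` inside the divisible group `ℝ/ℤ`; the extension is killed by
  -- `b * a`, so it takes values in the copy of `ZMod (b * a)` in `ℝ/ℤ`.
  obtain ⟨G, hG⟩ := (Module.Baer.of_divisible UnitAddCircle).extension_property_addMonoidHom
    (DistribSMul.toAddMonoidHom H a) (IsAddTorsionFree.nsmul_right_injective ha)
    (ZMod.toAddCircle.comp f)
  have hGa (h : H) : G (a • h) = ZMod.toAddCircle (f h) := DFunLike.congr_fun hG h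
  have hrange (h : H) : G h ∈ (ZMod.toAddCircle (N := b * a)).range := by
    have : (b * a) • G h = 0 := by
      rw [mul_comm, mul_nsmul, ← map_nsmul, hGa, ← map_nsmul, nsmul_eq_mul, ZMod.natCast_self,
        zero_mul, map_zero]
    obtain ⟨k, -, hk⟩ := (AddCircle.nsmul_eq_zero_iff (Nat.pos_of_ne_zero (NeZero.ne _))).1 this
    exact ⟨k, by rw [ZMod.toAddCircle_natCast, ← hk, mul_one]⟩
  let F : H →+ ZMod (b * a) :=
    (AddMonoidHom.ofInjective (ZMod.toAddCircle_injective (b * a))).symm.toAddMonoidHom.comp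
      (G.codRestrict _ hrange)
  have hF (h : H) : ZMod.toAddCircle (F h) = G h := by simp [F]
  refine ⟨F, AddMonoidHom.ext fun h => ZMod.toAddCircle_injective b ?_⟩
  simp only [AddMonoidHom.comp_apply, RingHom.toAddMonoidHom_eq_coe, AddMonoidHom.coe_coe]
  rw [ZMod.toAddCircle_castHom, hF, ← map_nsmul, hGa]

theorem ZMod.intCast_val_eq_castHom {n N : ℕ} [NeZero N] (h : n ∣ N) (y : ZMod N) :
    ((y.val : ℤ) : ZMod n) = castHom h (ZMod n) y := by
  rw [Int.cast_natCast, natCast_val, castHom_apply]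

theorem AddMonoidHom.exists_padicInt_lift {p : ℕ} [Fact p.Prime] {H : Type*} [AddCommGroup H]
    [IsAddTorsionFree H] {m : ℕ} (f : H →+ ZMod (p ^ m)) :
    ∃ F : H →+ ℤ_[p], (PadicInt.toZModPow m).toAddMonoidHom.comp F = f := by
  choose next hnext using fun (k : ℕ) (g : H →+ ZMod (p ^ k)) =>
    exists_zmod_lift (pow_dvd_pow p k.le_succ) g
  let G (k : ℕ) : H →+ ZMod (p ^ (m + k)) := Nat.rec f (fun k g => next (m + k) g) k
  have hG (k : ℕ) (x : H) :
      ZMod.castHom (pow_dvd_pow p (m.le_add_right k)) (ZMod (p ^ m)) (G k x) = f x := by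
    induction k with
    | zero => simp [G]
    | succ k ih =>
      rw [← ih, ← ZMod.castHom_comp _ (pow_dvd_pow p (m + k).le_succ), RingHom.comp_apply]
      exact congrArg _ (DFunLike.congr_fun (hnext (m + k) (G k)) x)
  let s (x : H) (i : ℕ) : ℤ := ((G i x).val : ℤ)
  have hs (x : H) (i : ℕ) : (p : ℤ) ^ i ∣ s x (i + 1) - s x i := by
    refine dvd_trans (pow_dvd_pow _ (i.le_add_left m)) ?_
    refine (ZMod.intCast_eq_intCast_iff_dvd_sub _ _ _).1 ?_
    rw [ZMod.intCast_val_eq_castHom dvd_rfl,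
      ZMod.intCast_val_eq_castHom (pow_dvd_pow p (m + i).le_succ)]
    simpa using (DFunLike.congr_fun (hnext (m + i) (G i)) x).symm
  let F (x : H) : ℤ_[p] :=
    PadicInt.ofIntSeq (s x) (PadicInt.isCauSeq_padicNorm_of_pow_dvd_sub _ p (hs x))
  have hF (x : H) (n : ℕ) : PadicInt.toZModPow n (F x) =
      ZMod.castHom (pow_dvd_pow p (n.le_add_left m)) (ZMod (p ^ n)) (G n x) := by
    rw [PadicInt.toZModPow_ofIntSeq_of_pow_dvd_sub _ _ (hs x), ZMod.intCast_val_eq_castHom]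
  refine ⟨AddMonoidHom.mk' F fun x y => PadicInt.ext_of_toZModPow.1 fun n => ?_,
    AddMonoidHom.ext fun x => ?_⟩
  · simp only [map_add, hF]
  · simp only [AddMonoidHom.comp_apply, AddMonoidHom.mk'_apply, RingHom.toAddMonoidHom_eq_coe,
      AddMonoidHom.coe_coe, hF, hG]

theorem Nat.not_pow_dvd_mul_of_not_pow_dvd {p n a b : ℕ} (hp : p.Prime) (ha : ¬ p ^ n ∣ a)
    (hb : ¬ p ^ n ∣ b) : ¬ p ^ (2 * n - 1) ∣ a * b := by
  have ha0 : a ≠ 0 := by rintro rfl; exact ha (dvd_zero _)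
  have hb0 : b ≠ 0 := by rintro rfl; exact hb (dvd_zero _)
  rw [hp.pow_dvd_iff_le_factorization ha0, not_le] at ha
  rw [hp.pow_dvd_iff_le_factorization hb0, not_le] at hb
  rw [hp.pow_dvd_iff_le_factorization (mul_ne_zero ha0 hb0), Nat.factorization_mul ha0 hb0,
    Finsupp.add_apply]
  omega

theorem ZMod.mul_ne_mul_of_castHom {p n N : ℕ} [Fact p.Prime] (hN : 2 * n - 1 ≤ N)
    (h : p ^ n ∣ p ^ N) {a b c d : ZMod (p ^ N)} (ha : castHom h (ZMod (p ^ n)) a ≠ 0)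
    (hb : castHom h (ZMod (p ^ n)) b ≠ 0) (hc : castHom h (ZMod (p ^ n)) c = 0)
    (hd : castHom h (ZMod (p ^ n)) d = 0) : a * b ≠ c * d := by
  have hdvd (x : ZMod (p ^ N)) : castHom h (ZMod (p ^ n)) x = 0 ↔ p ^ n ∣ x.val := by
    rw [castHom_apply, ← natCast_val, natCast_eq_zero_iff]
  intro habcd
  have hcd : p ^ (2 * n - 1) ∣ c.val * d.val := (pow_dvd_pow p (by omega)).trans
    ((pow_add p n n).symm ▸ mul_dvd_mul ((hdvd c).1 hc) ((hdvd d).1 hd))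
  have habcd' : a.val * b.val ≡ c.val * d.val [MOD p ^ (2 * n - 1)] :=
    ((natCast_eq_natCast_iff _ _ _).1 (by simpa using habcd)).of_dvd (pow_dvd_pow p hN)
  exact Nat.not_pow_dvd_mul_of_not_pow_dvd Fact.out (mt (hdvd a).2 ha) (mt (hdvd b).2 hb)
    (Nat.modEq_zero_iff_dvd.1 (habcd'.trans (Nat.modEq_zero_iff_dvd.2 hcd)))

theorem PadicInt.mul_ne_mul_of_toZModPow {p n : ℕ} [Fact p.Prime] {a b c d : ℤ_[p]}
    (ha : toZModPow n a ≠ 0) (hb : toZModPow n b ≠ 0) (hc : toZModPow n c = 0)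
    (hd : toZModPow n d = 0) : a * b ≠ c * d := by
  have h2n : n ≤ 2 * n := by omega
  have hproj (x : ℤ_[p]) :
      toZModPow n x = ZMod.castHom (pow_dvd_pow p h2n) _ (toZModPow (2 * n) x) :=
    (cast_toZModPow n (2 * n) h2n x).symm
  rw [hproj] at ha hb hc hd
  intro habcd
  refine ZMod.mul_ne_mul_of_castHom (by omega) _ ha hb hc hd ?_
  rw [← map_mul, ← map_mul, habcd]

section Lam

variable {ℓ : ℕ} [Fact ℓ.Prime]

theorem lamProj_coe_coe {n N : ℕ} (h : n ≤ N) :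
    LamProj ℓ N n = (ZMod.castHom (pow_dvd_pow ℓ h) (ZMod (ℓ ^ n))).toAddMonoidHom :=
  dif_pos _

theorem exists_lamProj_comp_eq {H : Type*} [AddCommGroup H] [IsAddTorsionFree H] {m M : ℕ∞}
    (hmM : m ≤ M) (f : H →+ Lam ℓ m) : ∃ F : H →+ Lam ℓ M, (LamProj ℓ M m).comp F = f := by
  induction m using ENat.recTopCoe with
  | top => obtain rfl := top_le_iff.1 hmM; exact ⟨f, AddMonoidHom.id_comp f⟩
  | coe n =>
    induction M using ENat.recTopCoe with
    | top => exact AddMonoidHom.exists_padicInt_lift (p := ℓ) f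
    | coe N =>
      rw [lamProj_coe_coe (by exact_mod_cast hmM)]
      exact AddMonoidHom.exists_zmod_lift _ f

theorem mfun_one_coe (n : ℕ) : Mfun 1 n = ((2 * n - 1 : ℕ) : ℕ∞) := rfl

theorem le_mfun_one (m : ℕ∞) : m ≤ Mfun 1 m := by
  induction m using ENat.recTopCoe with
  | top => exact le_rfl
  | coe n => rw [mfun_one_coe]; exact_mod_cast (by omega : n ≤ 2 * n - 1)

theorem mul_ne_mul_of_lamProj {m M : ℕ∞} (hM : Mfun 1 m ≤ M) {a b c d : Lam ℓ M}
    (ha : LamProj ℓ M m a ≠ 0) (hb : LamProj ℓ M m b ≠ 0) (hc : LamProj ℓ M m c = 0)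
    (hd : LamProj ℓ M m d = 0) : a * b ≠ c * d := by
  induction m using ENat.recTopCoe with
  | top =>
    obtain rfl : M = ⊤ := top_le_iff.1 hM
    change c = 0 at hc
    rw [hc, zero_mul]
    exact mul_ne_zero (M₀ := ℤ_[ℓ]) ha hb
  | coe n =>
    rw [mfun_one_coe] at hM
    induction M using ENat.recTopCoe with
    | top =>
      exact PadicInt.mul_ne_mul_of_toZModPow ha hb hc hd
    | coe N =>
      have hN : 2 * n - 1 ≤ N := by exact_mod_cast hM
      rw [lamProj_coe_coe (by omega)] at ha hb hc hd
      exact ZMod.mul_ne_mul_of_castHom hN (pow_dvd_pow ℓ (by omega)) ha hb hc hd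

end Lam

section Galois

variable {ℓ : ℕ} [Fact ℓ.Prime] {K : Type*} [Field K] {m : ℕ∞}

theorem galu_mul (σ : gal ℓ m K) (x y : Kˣ) : galu σ (x * y) = galu σ x + galu σ y :=
  map_add σ _ _

theorem galu_inv (σ : gal ℓ m K) (x : Kˣ) : galu σ x⁻¹ = -galu σ x :=
  map_neg σ _

theorem galu_pow (σ : gal ℓ m K) (x : Kˣ) (n : ℕ) : galu σ (x ^ n) = n • galu σ x :=
  map_nsmul σ _ _

theorem galApp_coe (σ : gal ℓ m K) (x : Kˣ) : galApp σ x = galu σ x := by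
  rw [galApp, dif_pos x.ne_zero, Units.mk0_val]

theorem galApp_mul (σ : gal ℓ m K) {x y : K} (hx : x ≠ 0) (hy : y ≠ 0) :
    galApp σ (x * y) = galApp σ x + galApp σ y := by
  lift x to Kˣ using isUnit_iff_ne_zero.2 hx
  lift y to Kˣ using isUnit_iff_ne_zero.2 hy
  rw [← Units.val_mul, galApp_coe, galApp_coe, galApp_coe, galu_mul]

theorem galApp_inv (σ : gal ℓ m K) (x : K) : galApp σ x⁻¹ = -galApp σ x := by
  rcases eq_or_ne x 0 with rfl | hx
  · simp [galApp]
  lift x to Kˣ using isUnit_iff_ne_zero.2 hx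
  rw [← Units.val_inv_eq_inv_val, galApp_coe, galApp_coe, galu_inv]

theorem galApp_div (σ : gal ℓ m K) {x y : K} (hx : x ≠ 0) (hy : y ≠ 0) :
    galApp σ (x / y) = galApp σ x - galApp σ y := by
  rw [div_eq_mul_inv, galApp_mul σ hx (inv_ne_zero hy), galApp_inv, sub_eq_add_neg]

theorem galApp_galProj {M : ℕ∞} (σ : gal ℓ M K) (x : K) :
    galApp (galProj M m σ) x = LamProj ℓ M m (galApp σ x) := by
  by_cases hx : x = 0
  · simp [galApp, hx]
  · simp only [galApp, dif_pos hx]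
    rfl

variable {A : ValuationSubring K} {σ τ : gal ℓ m K}

theorem galApp_eq_zero_of_mem_inertia (hσ : σ ∈ inertia ℓ m A) {x : K}
    (hx : A.valuation x = 1) : galApp σ x = 0 := by
  have hx0 : x ≠ 0 := by rintro rfl; simp at hx
  lift x to Kˣ using isUnit_iff_ne_zero.2 hx0
  rw [galApp_coe]
  exact hσ x hx

theorem galApp_neg_of_mem_inertia (hσ : σ ∈ inertia ℓ m A) (x : K) :
    galApp σ (-x) = galApp σ x := by
  rcases eq_or_ne x 0 with rfl | hx
  · rw [neg_zero]
  rw [neg_eq_neg_one_mul, galApp_mul σ (neg_ne_zero.2 one_ne_zero) hx,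
    galApp_eq_zero_of_mem_inertia hσ (by simp), zero_add]

theorem galApp_one_sub_of_valuation_lt_one (hσ : σ ∈ inertia ℓ m A) {x : K}
    (hx : A.valuation x < 1) : galApp σ (1 - x) = 0 :=
  galApp_eq_zero_of_mem_inertia hσ (Valuation.map_one_sub_of_lt _ hx)

theorem galApp_one_sub_of_one_lt_valuation (hσ : σ ∈ inertia ℓ m A) {x : K}
    (hx : 1 < A.valuation x) : galApp σ (1 - x) = galApp σ x := by
  have hx0 : x ≠ 0 := by rintro rfl; simp at hx
  have hinv : A.valuation x⁻¹ < 1 := by rw [map_inv₀]; exact inv_lt_one_of_one_lt₀ hx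
  have hunit : A.valuation (1 - x⁻¹) = 1 := Valuation.map_one_sub_of_lt _ hinv
  have hne : 1 - x⁻¹ ≠ 0 := by rintro h; simp [h] at hunit
  have hfactor : 1 - x = -x * (1 - x⁻¹) := by field_simp; ring
  rw [hfactor, galApp_mul σ (neg_ne_zero.2 hx0) hne, galApp_neg_of_mem_inertia hσ,
    galApp_eq_zero_of_mem_inertia hσ hunit, add_zero]

theorem isCPair_of_mem_inertia (hσ : σ ∈ inertia ℓ m A) (hτ : τ ∈ inertia ℓ m A) :
    IsCPair σ τ := by
  intro x _ _
  rcases lt_trichotomy (A.valuation x) 1 with hx | hx | hx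
  · rw [galApp_one_sub_of_valuation_lt_one hσ hx, galApp_one_sub_of_valuation_lt_one hτ hx,
      mul_zero, zero_mul]
  · rw [galApp_eq_zero_of_mem_inertia hσ hx, galApp_eq_zero_of_mem_inertia hτ hx,
      mul_zero, zero_mul]
  · rw [galApp_one_sub_of_one_lt_valuation hσ hx, galApp_one_sub_of_one_lt_valuation hτ hx]

theorem inertia_antitone {B : ValuationSubring K} (hAB : A ≤ B) :
    inertia ℓ m B ⊆ inertia ℓ m A :=
  fun _ hσ x hx => hσ x (ValuationSubring.unitGroup_le_unitGroup.2 hAB hx)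

instance ValuationSubring.isAddTorsionFree_quotient_unitGroup (A : ValuationSubring K) :
    IsAddTorsionFree (Additive Kˣ ⧸ Subgroup.toAddSubgroup A.unitGroup) := by
  refine IsAddTorsionFree.of_not_isOfFinAddOrder
    fun (x : Additive Kˣ ⧸ Subgroup.toAddSubgroup A.unitGroup) hx hfin => hx ?_
  obtain ⟨n, hn, hnx⟩ := isOfFinAddOrder_iff_nsmul_eq_zero.1 hfin
  induction x using QuotientAddGroup.induction_on with | H x => ?_
  rw [← QuotientAddGroup.mk_nsmul, QuotientAddGroup.eq_zero_iff] at hnx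
  rw [QuotientAddGroup.eq_zero_iff]
  change A.valuation ((x.toMul ^ n : Kˣ) : K) = 1 at hnx
  rwa [Units.val_pow_eq_pow_val, map_pow, pow_eq_one_iff_left hn.ne'] at hnx

theorem exists_lift_mem_inertia {M : ℕ∞} (hmM : m ≤ M) (hσ : σ ∈ inertia ℓ m A) :
    ∃ σ' ∈ inertia ℓ M A, galProj M m σ' = σ := by
  let U := Subgroup.toAddSubgroup A.unitGroup
  obtain ⟨F, hF⟩ := exists_lamProj_comp_eq (H := Additive Kˣ ⧸ U) hmM
    (QuotientAddGroup.lift U σ fun x hx => hσ x hx)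
  refine ⟨F.comp (QuotientAddGroup.mk' U), fun x hx => ?_, ?_⟩
  · change F (QuotientAddGroup.mk (Additive.ofMul x)) = 0
    rw [(QuotientAddGroup.eq_zero_iff _).2 hx, map_zero]
  · ext x
    exact DFunLike.congr_fun hF (QuotientAddGroup.mk (Additive.ofMul x))

end Galois

namespace ValuationSubring

variable {K : Type*} [Field K]

theorem valuation_units_pos (A : ValuationSubring K) (x : Kˣ) : 0 < A.valuation x :=
  (Valuation.pos_iff _).2 x.ne_zero

theorem valuation_units_inv (A : ValuationSubring K) (x : Kˣ) :
    A.valuation ((x⁻¹ : Kˣ) : K) = (A.valuation x)⁻¹ := by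
  rw [Units.val_inv_eq_inv_val, map_inv₀]

theorem valuation_eq_one_iff_mem_and_inv_mem (A : ValuationSubring K) (x : Kˣ) :
    A.valuation x = 1 ↔ (x : K) ∈ A ∧ ((x⁻¹ : Kˣ) : K) ∈ A := by
  rw [← A.valuation_le_one_iff, ← A.valuation_le_one_iff, valuation_units_inv,
    inv_le_one₀ (A.valuation_units_pos x)]
  exact ⟨fun h => ⟨h.le, h.ge⟩, fun h => le_antisymm h.1 h.2⟩

-- Collapses the convex subgroup of the value group generated by `γ`.
def coarsening (A : ValuationSubring K) (γ : A.ValueGroup) (hγ : 1 ≤ γ) :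
    ValuationSubring K where
  carrier := {x | ∃ n : ℕ, A.valuation x ≤ γ ^ n}
  zero_mem' := ⟨0, by simp⟩
  one_mem' := ⟨0, by simp⟩
  add_mem' := by
    rintro x y ⟨n, hn⟩ ⟨k, hk⟩
    refine ⟨n + k, (A.valuation.map_add x y).trans (max_le ?_ ?_)⟩
    · exact hn.trans (pow_le_pow_right₀ hγ (n.le_add_right k))
    · exact hk.trans (pow_le_pow_right₀ hγ (k.le_add_left n))
  mul_mem' := by
    rintro x y ⟨n, hn⟩ ⟨k, hk⟩
    exact ⟨n + k, by rw [map_mul, pow_add]; exact mul_le_mul' hn hk⟩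
  neg_mem' := by
    rintro x ⟨n, hn⟩
    exact ⟨n, by rwa [Valuation.map_neg]⟩
  mem_or_inv_mem' x := by
    rcases le_total (A.valuation x) 1 with hx | hx
    · exact Or.inl ⟨0, by rwa [pow_zero]⟩
    · exact Or.inr ⟨0, by rw [pow_zero, map_inv₀]; exact inv_le_one_of_one_le₀ hx⟩

theorem le_coarsening (A : ValuationSubring K) {γ : A.ValueGroup} (hγ : 1 ≤ γ) :
    A ≤ A.coarsening γ hγ :=
  fun x hx => ⟨0, by rw [pow_zero]; exact (A.valuation_le_one_iff x).2 hx⟩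

def chainSup (c : Set (ValuationSubring K)) (hc : IsChain (· ≤ ·) c) (hne : c.Nonempty) :
    ValuationSubring K where
  carrier := {x | ∃ A ∈ c, x ∈ A}
  zero_mem' := ⟨hne.some, hne.some_mem, zero_mem _⟩
  one_mem' := ⟨hne.some, hne.some_mem, one_mem _⟩
  add_mem' := by
    rintro x y ⟨A, hA, hx⟩ ⟨B, hB, hy⟩
    rcases hc.total hA hB with h | h
    · exact ⟨B, hB, AddMemClass.add_mem (h hx) hy⟩
    · exact ⟨A, hA, AddMemClass.add_mem hx (h hy)⟩
  mul_mem' := by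
    rintro x y ⟨A, hA, hx⟩ ⟨B, hB, hy⟩
    rcases hc.total hA hB with h | h
    · exact ⟨B, hB, MulMemClass.mul_mem (h hx) hy⟩
    · exact ⟨A, hA, MulMemClass.mul_mem hx (h hy)⟩
  neg_mem' := by
    rintro x ⟨A, hA, hx⟩
    exact ⟨A, hA, NegMemClass.neg_mem hx⟩
  mem_or_inv_mem' x :=
    (hne.some.mem_or_inv_mem x).imp (⟨_, hne.some_mem, ·⟩) (⟨_, hne.some_mem, ·⟩)

theorem le_chainSup {c : Set (ValuationSubring K)} {hc : IsChain (· ≤ ·) c} {hne : c.Nonempty}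
    {A : ValuationSubring K} (hA : A ∈ c) : A ≤ chainSup c hc hne :=
  fun _ hx => ⟨A, hA, hx⟩

theorem exists_valuation_lt_one_lt_of_not_le {V W : ValuationSubring K} (hVW : ¬V ≤ W)
    (hWV : ¬W ≤ V) : ∃ c : Kˣ, V.valuation c < 1 ∧ 1 < W.valuation c := by
  obtain ⟨a, haV, haW⟩ := SetLike.not_le_iff_exists.1 hVW
  obtain ⟨b, hbW, hbV⟩ := SetLike.not_le_iff_exists.1 hWV
  have ha0 : a ≠ 0 := by rintro rfl; exact haW (zero_mem W)
  have hb0 : b ≠ 0 := by rintro rfl; exact hbV (zero_mem V)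
  rw [← valuation_le_one_iff, not_le] at haW hbV
  rw [← valuation_le_one_iff] at haV hbW
  refine ⟨Units.mk0 (a / b) (div_ne_zero ha0 hb0), ?_, ?_⟩
  · rw [Units.val_mk0, map_div₀, div_lt_one₀ ((Valuation.pos_iff _).2 hb0)]
    exact haV.trans_lt hbV
  · rw [Units.val_mk0, map_div₀, one_lt_div₀ ((Valuation.pos_iff _).2 hb0)]
    exact hbW.trans_lt haW

end ValuationSubring

section Coarsest

open ValuationSubring

variable {ℓ : ℕ} [Fact ℓ.Prime] {K : Type*} [Field K] {m : ℕ∞} {σ τ : gal ℓ m K}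
  {V W : ValuationSubring K}

theorem mem_inertia_chainSup {c : Set (ValuationSubring K)} (hc : IsChain (· ≤ ·) c)
    (hne : c.Nonempty) (hσ : ∀ A ∈ c, σ ∈ inertia ℓ m A) : σ ∈ inertia ℓ m (chainSup c hc hne) := by
  intro x hx
  obtain ⟨⟨A, hA, hxA⟩, ⟨B, hB, hxB⟩⟩ := (valuation_eq_one_iff_mem_and_inv_mem _ x).1 hx
  rcases hc.total hA hB with h | h
  · exact hσ B hB x ((valuation_eq_one_iff_mem_and_inv_mem B x).2 ⟨h hxA, hxB⟩)
  · exact hσ A hA x ((valuation_eq_one_iff_mem_and_inv_mem A x).2 ⟨hxA, h hxB⟩)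

theorem exists_galu_ne_zero_of_maximal (hV : Maximal (σ ∈ inertia ℓ m ·) V) {c : Kˣ}
    (hc : V.valuation c < 1) :
    ∃ (d : Kˣ) (n : ℕ), galu σ d ≠ 0 ∧ V.valuation c ^ n ≤ V.valuation d ∧ V.valuation d < 1 := by
  have hc0 := V.valuation_units_pos c
  have hγ : 1 ≤ (V.valuation c)⁻¹ := (one_le_inv₀ hc0).2 hc.le
  obtain ⟨d, hdW, hσd⟩ : ∃ d : Kˣ, (V.coarsening _ hγ).valuation d = 1 ∧ galu σ d ≠ 0 := by
    by_contra! h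
    have hinv : ((c⁻¹ : Kˣ) : K) ∈ V :=
      hV.2 h (V.le_coarsening hγ) ⟨1, by rw [valuation_units_inv, pow_one]⟩
    rw [← valuation_le_one_iff, valuation_units_inv, inv_le_one₀ hc0] at hinv
    exact hinv.not_gt hc
  obtain ⟨⟨n₁, h₁⟩, ⟨n₂, h₂⟩⟩ := (valuation_eq_one_iff_mem_and_inv_mem _ d).1 hdW
  have hd0 := V.valuation_units_pos d
  rw [valuation_units_inv, inv_pow, inv_le_inv₀ hd0 (pow_pos hc0 _)] at h₂
  rw [inv_pow, le_inv_comm₀ hd0 (pow_pos hc0 _)] at h₁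
  have hd1 : V.valuation d ≠ 1 := fun h => hσd (hV.1 d h)
  rcases hd1.lt_or_gt with hd | hd
  · exact ⟨d, n₂, hσd, h₂, hd⟩
  · refine ⟨d⁻¹, n₁, by rwa [galu_inv, neg_ne_zero], ?_, ?_⟩
    · rwa [valuation_units_inv]
    · rwa [valuation_units_inv, inv_lt_one₀ hd0]

theorem exists_mixed_galu_ne_zero (hV : Maximal (σ ∈ inertia ℓ m ·) V) {c : Kˣ}
    (hcV : V.valuation c < 1) (hcW : 1 < W.valuation c) :
    ∃ c' : Kˣ, V.valuation c' < 1 ∧ 1 < W.valuation c' ∧ galu σ c' ≠ 0 := by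
  by_cases hσc : galu σ c ≠ 0
  · exact ⟨c, hcV, hcW, hσc⟩
  obtain ⟨d, n, hσd, hdn, hdV⟩ := exists_galu_ne_zero_of_maximal hV hcV
  by_cases hdW : 1 < W.valuation d
  · exact ⟨d, hdV, hdW, hσd⟩
  -- `v d ≥ v c ^ n` and `w d ≤ 1` make `c ^ (n + 1) / d` again satisfy `v < 1 < w`
  refine ⟨c ^ (n + 1) * d⁻¹, ?_, ?_, ?_⟩
  · rw [Units.val_mul, map_mul, valuation_units_inv, Units.val_pow_eq_pow_val, map_pow,
      mul_inv_lt_iff₀ (V.valuation_units_pos d), one_mul, pow_succ]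
    exact (mul_lt_of_lt_one_right (pow_pos (V.valuation_units_pos c) n) hcV).trans_le hdn
  · rw [Units.val_mul, map_mul, valuation_units_inv, Units.val_pow_eq_pow_val, map_pow,
      lt_mul_inv_iff₀ (W.valuation_units_pos d), one_mul]
    exact (not_lt.1 hdW).trans_lt (one_lt_pow₀ hcW n.succ_ne_zero)
  · rwa [galu_mul, galu_pow, galu_inv, not_not.1 hσc, smul_zero, zero_add, neg_ne_zero]

theorem galu_eq_zero_of_mixed (hσV : σ ∈ inertia ℓ m V) (hσW : σ ∈ inertia ℓ m W) {c : Kˣ}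
    (hcV : V.valuation c < 1) (hcW : 1 < W.valuation c) : galu σ c = 0 := by
  rw [← galApp_coe, ← galApp_one_sub_of_one_lt_valuation hσW hcW,
    galApp_one_sub_of_valuation_lt_one hσV hcV]

theorem le_of_maximal (hV : Maximal (σ ∈ inertia ℓ m ·) V) (hσW : σ ∈ inertia ℓ m W) : W ≤ V := by
  by_contra hWV
  by_cases hVW : V ≤ W
  · exact hWV (hV.2 hσW hVW)
  obtain ⟨c, hcV, hcW⟩ := exists_valuation_lt_one_lt_of_not_le hVW hWV
  obtain ⟨c', hc'V, hc'W, hσc'⟩ := exists_mixed_galu_ne_zero hV hcV hcW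
  exact hσc' (galu_eq_zero_of_mixed hV.1 hσW hc'V hc'W)

theorem exists_isVsigma (hσ : IsValuative σ) : ∃ V, IsVsigma σ V := by
  obtain ⟨A, hA⟩ := hσ
  obtain ⟨V, -, hV⟩ := zorn_le_nonempty₀ {A | σ ∈ inertia ℓ m A}
    (fun c hc hchain B hB => ⟨chainSup c hchain ⟨B, hB⟩, mem_inertia_chainSup hchain _ hc,
      fun _ => le_chainSup⟩) A hA
  exact ⟨V, hV.1, fun W hW => le_of_maximal hV hW⟩

theorem IsVsigma.maximal (h : IsVsigma σ V) : Maximal (σ ∈ inertia ℓ m ·) V :=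
  ⟨h.1, fun W hW _ => h.2 W hW⟩

end Coarsest

section Comparability

open ValuationSubring

variable {ℓ : ℕ} [Fact ℓ.Prime] {K : Type*} [Field K] {m : ℕ∞} {σ τ : gal ℓ m K}
  {V W : ValuationSubring K}

theorem exists_mixed_galu_ne_zero_ne_zero (hV : Maximal (σ ∈ inertia ℓ m ·) V)
    (hW : Maximal (τ ∈ inertia ℓ m ·) W) {c : Kˣ} (hcV : V.valuation c < 1)
    (hcW : 1 < W.valuation c) :
    ∃ c' : Kˣ, V.valuation c' < 1 ∧ 1 < W.valuation c' ∧ galu σ c' ≠ 0 ∧ galu τ c' ≠ 0 := by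
  obtain ⟨a, haV, haW, hσa⟩ := exists_mixed_galu_ne_zero hV hcV hcW
  obtain ⟨b, hbW, hbV, hτb⟩ := exists_mixed_galu_ne_zero hW (W := V) (c := c⁻¹)
    (by rwa [valuation_units_inv, inv_lt_one₀ (W.valuation_units_pos c)])
    (by rwa [valuation_units_inv, one_lt_inv₀ (V.valuation_units_pos c)])
  rw [← inv_lt_one₀ (V.valuation_units_pos b), ← valuation_units_inv] at hbV
  rw [← one_lt_inv₀ (W.valuation_units_pos b), ← valuation_units_inv] at hbW
  rw [← neg_ne_zero, ← galu_inv] at hτb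
  by_cases hτa : galu τ a ≠ 0
  · exact ⟨a, haV, haW, hσa, hτa⟩
  by_cases hσb : galu σ b⁻¹ ≠ 0
  · exact ⟨b⁻¹, hbV, hbW, hσb, hτb⟩
  rw [not_not] at hτa hσb
  refine ⟨a * b⁻¹, ?_, ?_, ?_, ?_⟩
  · rw [Units.val_mul, map_mul]
    exact mul_lt_one_of_nonneg_of_lt_one_left zero_le haV hbV.le
  · rw [Units.val_mul, map_mul]
    exact one_lt_mul_of_lt_of_le haW hbW.le
  · rwa [galu_mul, hσb, add_zero]
  · rwa [galu_mul, hτa, zero_add]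

theorem exists_galApp_obstruction (hσ : σ ∈ inertia ℓ m V) (hτ : τ ∈ inertia ℓ m W) {c : Kˣ}
    (hcV : V.valuation c < 1) (hcW : 1 < W.valuation c) (hσc : galu σ c ≠ 0)
    (hτc : galu τ c ≠ 0) :
    ∃ x : K, x ≠ 0 ∧ x ≠ 1 ∧ galApp σ x ≠ 0 ∧ galApp τ (1 - x) ≠ 0 ∧
      galApp σ (1 - x) = 0 ∧ galApp τ x = 0 := by
  have hc1 : (c : K) - 1 ≠ 0 := by
    rw [sub_ne_zero]; rintro h; rw [h, map_one] at hcV; exact hcV.false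
  have hσc1 : galApp σ ((c : K) - 1) = 0 := by
    rw [← neg_sub, galApp_neg_of_mem_inertia hσ, galApp_one_sub_of_valuation_lt_one hσ hcV]
  have hτc1 : galApp τ ((c : K) - 1) = galu τ c := by
    rw [← neg_sub, galApp_neg_of_mem_inertia hτ, galApp_one_sub_of_one_lt_valuation hτ hcW,
      galApp_coe]
  have h1x : 1 - c / ((c : K) - 1) = -((c : K) - 1)⁻¹ := by field_simp; ring
  refine ⟨c / (c - 1), div_ne_zero c.ne_zero hc1, ?_, ?_, ?_, ?_, ?_⟩
  · rw [Ne, div_eq_one_iff_eq hc1]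
    intro h
    exact one_ne_zero (sub_eq_self.1 h.symm)
  · rwa [galApp_div σ c.ne_zero hc1, hσc1, sub_zero, galApp_coe]
  · rwa [h1x, galApp_neg_of_mem_inertia hτ, galApp_inv, hτc1, neg_ne_zero]
  · rw [h1x, galApp_neg_of_mem_inertia hσ, galApp_inv, hσc1, neg_zero]
  · rw [galApp_div τ c.ne_zero hc1, hτc1, galApp_coe, sub_self]

theorem le_or_le_of_isCPair {M : ℕ∞} (hM : Mfun 1 m ≤ M) (hV : IsVsigma σ V)
    (hW : IsVsigma τ W) {σ' τ' : gal ℓ M K} (hσ' : galProj M m σ' = σ)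
    (hτ' : galProj M m τ' = τ) (hC : IsCPair σ' τ') : V ≤ W ∨ W ≤ V := by
  by_contra! h
  obtain ⟨c₀, h₀V, h₀W⟩ := exists_valuation_lt_one_lt_of_not_le h.1 h.2
  obtain ⟨c, hcV, hcW, hσc, hτc⟩ :=
    exists_mixed_galu_ne_zero_ne_zero hV.maximal hW.maximal h₀V h₀W
  obtain ⟨x, hx0, hx1, h₁, h₂, h₃, h₄⟩ := exists_galApp_obstruction hV.1 hW.1 hcV hcW hσc hτc
  subst hσ' hτ'
  rw [galApp_galProj] at h₁ h₂ h₃ h₄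
  exact mul_ne_mul_of_lamProj hM h₁ h₂ h₃ h₄ (hC x hx0 hx1)

theorem exists_isCPair_lift {M : ℕ∞} (hmM : m ≤ M) {A : ValuationSubring K}
    (hσ : σ ∈ inertia ℓ m A) (hτ : τ ∈ inertia ℓ m A) :
    ∃ σ' τ' : gal ℓ M K, galProj M m σ' = σ ∧ galProj M m τ' = τ ∧ IsCPair σ' τ' := by
  obtain ⟨σ', hσ'A, rfl⟩ := exists_lift_mem_inertia hmM hσ
  obtain ⟨τ', hτ'A, rfl⟩ := exists_lift_mem_inertia hmM hτ
  exact ⟨σ', τ', rfl, rfl, isCPair_of_mem_inertia hσ'A hτ'A⟩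

end Comparability

theorem stmt13_general (ℓ : ℕ) [Fact ℓ.Prime] (m M : ℕ∞) (hM : Mfun 1 m ≤ M)
    (K : Type*) [Field K] (σ τ : gal ℓ m K)
    (hσ : IsValuative σ) (hτ : IsValuative τ) :
    (∃ Vσ Vτ : ValuationSubring K, IsVsigma σ Vσ ∧ IsVsigma τ Vτ ∧
      (Vσ ≤ Vτ ∨ Vτ ≤ Vσ)) ↔
    (∃ σ' τ' : gal ℓ M K, galProj M m σ' = σ ∧ galProj M m τ' = τ ∧ IsCPair σ' τ') := by
  have hmM : m ≤ M := (le_mfun_one m).trans hM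
  constructor
  · rintro ⟨V, W, hV, hW, hVW | hWV⟩
    · exact exists_isCPair_lift hmM hV.1 (inertia_antitone hVW hW.1)
    · exact exists_isCPair_lift hmM (inertia_antitone hWV hV.1) hW.1
  · rintro ⟨σ', τ', hσ', hτ', hC⟩
    obtain ⟨V, hV⟩ := exists_isVsigma hσ
    obtain ⟨W, hW⟩ := exists_isVsigma hτ
    exact ⟨V, W, hV, hW, le_or_le_of_isCPair hM hV hW hσ' hτ' hC⟩

/-- Comparability of `v_σ` and `v_τ` is detected by C-pairs of lifts. -/
theorem stmt13 (ℓ : ℕ) [Fact ℓ.Prime] (m M : ℕ∞) (hm : 1 ≤ m) (hM : Mfun 1 m ≤ M)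
    (K : Type*) [Field K] (hμ : MuIn K 2 ℓ M) (σ τ : gal ℓ m K)
    (hσ : IsValuative σ) (hτ : IsValuative τ) :
    (∃ Vσ Vτ : ValuationSubring K, IsVsigma σ Vσ ∧ IsVsigma τ Vτ ∧
      (Vσ ≤ Vτ ∨ Vτ ≤ Vσ)) ↔
    (∃ σ' τ' : gal ℓ M K, galProj M m σ' = σ ∧ galProj M m τ' = τ ∧ IsCPair σ' τ') :=
  stmt13_general ℓ m M hM K σ τ hσ hτ
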